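/- arXiv:0910.0718 — 6 statements merged into one kernel-verified Lean document; each statement's English description precedes it below -/
import Mathlib

section
/- The logarithmic one-forms ξ_{ij} = d log(x_i − x_j) on the configuration space of n distinct points satisfy the Arnold relation: ξ_{ij} ∧ ξ_{ik} + ξ_{ik} ∧ ξ_{jk} + ξ_{jk} ∧ ξ_{ij} = 0 for distinct i, j, k. -/
/-!
Write `α = xᵢ - xⱼ`, `β = xᵢ - xₖ`, `γ = xⱼ - xₖ`, so that `α + γ = β`, and the same relation holds
between their differentials. Hence all three wedges `dα ∧ dβ`, `dβ ∧ dγ`, `dγ ∧ dα` are `±dα ∧ dβ`,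
and the Arnold relation reduces to the partial-fraction identity
`1/(αβ) + 1/(βγ) - 1/(γα) = (γ + α - β)/(αβγ) = 0`.
-/

-- `(a, b, c)` and `(a', b', c')` are the values of `dα, dβ, dγ` on the two tangent vectors.
theorem arnold_identity_of_add_eq {K : Type*} [Field K] {α β γ : K}
    (hα : α ≠ 0) (hβ : β ≠ 0) (hγ : γ ≠ 0) (h : α + γ = β)
    {a b c a' b' c' : K} (hv : a + c = b) (hw : a' + c' = b') :
    (a / α * (b' / β) - a' / α * (b / β)) + (b / β * (c' / γ) - b' / β * (c / γ))
      + (c / γ * (a' / α) - c' / γ * (a / α)) = 0 := by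
  subst hv hw
  calc _ = (a * c' - a' * c) * (1 / (α * β) + 1 / (β * γ) - 1 / (γ * α)) := by ring
    _ = (a * c' - a' * c) * ((γ + α - β) / (α * β * γ)) := by field_simp
    _ = 0 := by rw [← h, add_comm γ, sub_self, zero_div, mul_zero]

/-- The Arnold relation `ξ_{ij}∧ξ_{ik} + ξ_{ik}∧ξ_{jk} + ξ_{jk}∧ξ_{ij} = 0`
for the logarithmic one-forms `ξ_{ab} = d log(x_a − x_b) = (dx_a − dx_b)/(x_a − x_b)`
on the configuration space of `n` distinct points, stated pointwise: at a point `x`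
with pairwise distinct coordinates, the value of each `ξ_{ab}` on a tangent vector `u`
is `(u a − u b)/(x a − x b)`, and the wedge of two one-forms `ω, η` evaluated on a pair
of tangent vectors `(v, w)` is `ω v * η w − ω w * η v`. -/
theorem arnold_relation (n : ℕ) (x : Fin n → ℂ) (hx : ∀ i j : Fin n, i ≠ j → x i ≠ x j)
    (i j k : Fin n) (hij : i ≠ j) (hik : i ≠ k) (hjk : j ≠ k) (v w : Fin n → ℂ) :
    letI ξ : Fin n → Fin n → (Fin n → ℂ) → ℂ := fun a b u => (u a - u b) / (x a - x b)
    (ξ i j v * ξ i k w - ξ i j w * ξ i k v)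
      + (ξ i k v * ξ j k w - ξ i k w * ξ j k v)
      + (ξ j k v * ξ i j w - ξ j k w * ξ i j v) = 0 :=
  arnold_identity_of_add_eq (sub_ne_zero.2 (hx i j hij)) (sub_ne_zero.2 (hx i k hik))
    (sub_ne_zero.2 (hx j k hjk)) (sub_add_sub_cancel _ _ _) (sub_add_sub_cancel _ _ _)
    (sub_add_sub_cancel _ _ _)
end

section
/- In the Lie algebra 𝔛 generated by Z₁, Z₁₁, Z₂, Z₂₂, Z₁₂ modulo the relations [Z₁,Z₂]=[Z₁₁,Z₂]=[Z₁,Z₂₂]=0 and [Z₁₁,Z₂₂]=−[Z₁₁,Z₁₂]=[Z₂₂,Z₁₂]=−[Z₁−Z₂,Z₁₂], the Lie subalgebra 𝔛^{(1)} generated by {Z₁, Z₁₁, Z₁₂} satisfies [𝔛^{(1)}, 𝔛^{(2)}] ⊆ 𝔛^{(1)}, where 𝔛^{(2)} is the subalgebra generated by {Z₂, Z₂₂}. -/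
open FreeLieAlgebra in
/-- The free Lie algebra on the five generators `Z₁, Z₁₁, Z₂, Z₂₂, Z₁₂`
(indexed by `0, 1, 2, 3, 4`). -/
abbrev KZ5.L := FreeLieAlgebra ℂ (Fin 5)

/-- The generators. -/
noncomputable def KZ5.e (i : Fin 5) : KZ5.L := FreeLieAlgebra.of ℂ i

open KZ5 in
/-- The set of defining relations of the infinitesimal pure braid Lie algebra `𝔛`:
`[Z₁,Z₂]`, `[Z₁₁,Z₂]`, `[Z₁,Z₂₂]`, `[Z₁₁,Z₂₂]+[Z₁₁,Z₁₂]`, `[Z₁₁,Z₂₂]+[Z₁₂,Z₂₂]`,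
`[Z₁₁,Z₂₂]+[Z₁−Z₂,Z₁₂]`, where `(Z₁,Z₁₁,Z₂,Z₂₂,Z₁₂) = (e 0, e 1, e 2, e 3, e 4)`. -/
noncomputable def KZ5.rels : Set KZ5.L :=
  {⁅e 0, e 2⁆, ⁅e 1, e 2⁆, ⁅e 0, e 3⁆,
   ⁅e 1, e 3⁆ + ⁅e 1, e 4⁆, ⁅e 1, e 3⁆ + ⁅e 4, e 3⁆, ⁅e 1, e 3⁆ + ⁅e 0 - e 2, e 4⁆}

/-- The Lie ideal generated by the relations. -/
noncomputable def KZ5.I : LieIdeal ℂ KZ5.L := LieSubmodule.lieSpan ℂ KZ5.L KZ5.rels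

/-- The infinitesimal pure braid Lie algebra `𝔛` of the formal 2KZ equation. -/
abbrev KZ5.X := KZ5.L ⧸ KZ5.I

/-- The images of the generators in `𝔛`. -/
noncomputable def KZ5.z (i : Fin 5) : KZ5.X := LieSubmodule.Quotient.mk (N := KZ5.I) (KZ5.e i)

open KZ5 in
/-- The Lie subalgebra `𝔛^{(1)}` generated by `{Z₁, Z₁₁, Z₁₂}`. -/
noncomputable def KZ5.X1 : LieSubalgebra ℂ KZ5.X :=
  LieSubalgebra.lieSpan ℂ KZ5.X {z 0, z 1, z 4}

open KZ5 in
/-- The Lie subalgebra `𝔛^{(2)}` generated by `{Z₂, Z₂₂}`. -/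
noncomputable def KZ5.X2 : LieSubalgebra ℂ KZ5.X :=
  LieSubalgebra.lieSpan ℂ KZ5.X {z 2, z 3}

/-!
Since `ad w` is a derivation, `w` normalizes the Lie subalgebra generated by a set `s` as soon as
`⁅w, x⁆` lies in it for every `x ∈ s`; and the normalizer is itself a Lie subalgebra. So it is
enough to check that `⁅Z₂, ·⁆` and `⁅Z₂₂, ·⁆` map `Z₁, Z₁₁, Z₁₂` into `𝔛^{(1)}`, which the
defining relations give directly: `[Z₂, Z₁] = [Z₂, Z₁₁] = [Z₂₂, Z₁] = 0`,
`[Z₂, Z₁₂] = [Z₁ - Z₁₁, Z₁₂]`, `[Z₂₂, Z₁₁] = [Z₁₁, Z₁₂]` and `[Z₂₂, Z₁₂] = -[Z₁₁, Z₁₂]`.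
-/

namespace LieSubalgebra

variable {R L : Type*} [CommRing R] [LieRing L] [LieAlgebra R L]

theorem mem_normalizer_lieSpan_of_lie_mem {s : Set L} {w : L}
    (h : ∀ x ∈ s, ⁅w, x⁆ ∈ lieSpan R L s) : w ∈ (lieSpan R L s).normalizer := by
  rw [mem_normalizer_iff]
  intro y hy
  induction hy using lieSpan_induction with
  | mem x hx => exact h x hx
  | zero => rw [lie_zero]; exact zero_mem _
  | add x y _ _ hx hy => rw [lie_add]; exact add_mem hx hy
  | smul a x _ hx => rw [lie_smul]; exact SMulMemClass.smul_mem a hx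
  | lie x y hx' hy' hx hy => rw [leibniz_lie]; exact add_mem (lie_mem _ hx hy') (lie_mem _ hx' hy)

end LieSubalgebra

namespace KZ5

theorem mk'_eq_zero_of_mem_rels {r : L} (h : r ∈ rels) : LieSubmodule.Quotient.mk' I r = 0 :=
  (LieSubmodule.Quotient.mk_eq_zero I).mpr (LieSubmodule.subset_lieSpan h)

theorem lie_z_z (i j : Fin 5) : ⁅z i, z j⁆ = LieSubmodule.Quotient.mk' I ⁅e i, e j⁆ := rfl

theorem lie_z0_z2 : ⁅z 0, z 2⁆ = 0 :=
  mk'_eq_zero_of_mem_rels (by simp [rels])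

theorem lie_z1_z2 : ⁅z 1, z 2⁆ = 0 :=
  mk'_eq_zero_of_mem_rels (by simp [rels])

theorem lie_z0_z3 : ⁅z 0, z 3⁆ = 0 :=
  mk'_eq_zero_of_mem_rels (by simp [rels])

theorem lie_z1_z3_add_lie_z1_z4 : ⁅z 1, z 3⁆ + ⁅z 1, z 4⁆ = 0 := by
  simpa only [map_add, lie_z_z] using mk'_eq_zero_of_mem_rels (r := ⁅e 1, e 3⁆ + ⁅e 1, e 4⁆)
    (by simp [rels])

theorem lie_z1_z3_add_lie_z4_z3 : ⁅z 1, z 3⁆ + ⁅z 4, z 3⁆ = 0 := by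
  simpa only [map_add, lie_z_z] using mk'_eq_zero_of_mem_rels (r := ⁅e 1, e 3⁆ + ⁅e 4, e 3⁆)
    (by simp [rels])

theorem lie_z1_z3_add_lie_z0_sub_lie_z2_z4 : ⁅z 1, z 3⁆ + (⁅z 0, z 4⁆ - ⁅z 2, z 4⁆) = 0 := by
  simpa only [sub_lie, map_add, map_sub, lie_z_z] using
    mk'_eq_zero_of_mem_rels (r := ⁅e 1, e 3⁆ + ⁅e 0 - e 2, e 4⁆) (by simp [rels])

theorem z0_mem_X1 : z 0 ∈ X1 := LieSubalgebra.subset_lieSpan (by simp)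

theorem z1_mem_X1 : z 1 ∈ X1 := LieSubalgebra.subset_lieSpan (by simp)

theorem z4_mem_X1 : z 4 ∈ X1 := LieSubalgebra.subset_lieSpan (by simp)

theorem mem_normalizer_X1_of_lie_mem {w : X}
    (h0 : ⁅w, z 0⁆ ∈ X1) (h1 : ⁅w, z 1⁆ ∈ X1) (h4 : ⁅w, z 4⁆ ∈ X1) : w ∈ X1.normalizer :=
  LieSubalgebra.mem_normalizer_lieSpan_of_lie_mem <| by
    rintro x (rfl | rfl | rfl)
    exacts [h0, h1, h4]

theorem z2_mem_normalizer_X1 : z 2 ∈ X1.normalizer := by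
  have h0 : ⁅z 2, z 0⁆ = 0 := by rw [← lie_skew, lie_z0_z2, neg_zero]
  have h1 : ⁅z 2, z 1⁆ = 0 := by rw [← lie_skew, lie_z1_z2, neg_zero]
  have h4 : ⁅z 2, z 4⁆ = ⁅z 0, z 4⁆ - ⁅z 1, z 4⁆ := by
    linear_combination (norm := abel) lie_z1_z3_add_lie_z1_z4 - lie_z1_z3_add_lie_z0_sub_lie_z2_z4
  apply mem_normalizer_X1_of_lie_mem
  · exact h0 ▸ X1.zero_mem
  · exact h1 ▸ X1.zero_mem
  · exact h4 ▸ X1.sub_mem (X1.lie_mem z0_mem_X1 z4_mem_X1) (X1.lie_mem z1_mem_X1 z4_mem_X1)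

theorem z3_mem_normalizer_X1 : z 3 ∈ X1.normalizer := by
  have h0 : ⁅z 3, z 0⁆ = 0 := by rw [← lie_skew, lie_z0_z3, neg_zero]
  have h1 : ⁅z 3, z 1⁆ = ⁅z 1, z 4⁆ := by
    rw [← lie_skew]
    linear_combination (norm := abel) -lie_z1_z3_add_lie_z1_z4
  have h4 : ⁅z 3, z 4⁆ = -⁅z 1, z 4⁆ := by
    rw [← lie_skew]
    linear_combination (norm := abel) lie_z1_z3_add_lie_z1_z4 - lie_z1_z3_add_lie_z4_z3
  apply mem_normalizer_X1_of_lie_mem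
  · exact h0 ▸ X1.zero_mem
  · exact h1 ▸ X1.lie_mem z1_mem_X1 z4_mem_X1
  · exact h4 ▸ X1.neg_mem (X1.lie_mem z1_mem_X1 z4_mem_X1)

theorem X2_le_normalizer_X1 : X2 ≤ X1.normalizer := by
  rw [X2, LieSubalgebra.lieSpan_le]
  rintro w (rfl | rfl)
  exacts [z2_mem_normalizer_X1, z3_mem_normalizer_X1]

end KZ5

/-- `[𝔛^{(1)}, 𝔛^{(2)}] ⊆ 𝔛^{(1)}`. -/
theorem KZ5.bracket_X1_X2_subset_X1 :
    ∀ x ∈ KZ5.X1, ∀ y ∈ KZ5.X2, ⁅x, y⁆ ∈ KZ5.X1 :=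
  fun x hx y hy => (KZ5.X1.mem_normalizer_iff' y).mp (KZ5.X2_le_normalizer_X1 hy) x hx
end

section
/- The iterated integral is a shuffle homomorphism: for words w₁, w₂ of one-forms that are iterated-integrable along a path, ∫(w₁ ⧢ w₂) = (∫ w₁)·(∫ w₂), where ∫ denotes Chen's iterated integral along a fixed path and ⧢ is the shuffle product. -/
/-!
Both sides vanish at `t = 0` when both words are nonempty, and the shuffle recursion
`au ⧢ bv = a(u ⧢ bv) + b(au ⧢ v)` is exactly the Leibniz rule for `d/dt (∫ au)(∫ bv)`,
so the theorem follows by induction on the words from the fundamental theorem of calculus.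
-/

namespace IterIntShuffle

/-- The shuffle product of two words of one-forms. -/
noncomputable def sh : List (ℝ → ℂ) → List (ℝ → ℂ) → (List (ℝ → ℂ) →₀ ℂ)
  | [], w => Finsupp.single w 1
  | (a :: u), [] => Finsupp.single (a :: u) 1
  | (a :: u), (b :: v) =>
      Finsupp.mapDomain (a :: ·) (sh u (b :: v)) +
      Finsupp.mapDomain (b :: ·) (sh (a :: u) v)
termination_by u v => u.length + v.length

/-- Chen's iterated integral of a word of one-forms (pulled back to the interval) :
`∫₀^t 𝟏 = 1` and `∫₀^t ω₁∘⋯∘ω_r = ∫₀^t ω₁(s)·(∫₀^s ω₂∘⋯∘ω_r) ds`. -/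
noncomputable def II : List (ℝ → ℂ) → ℝ → ℂ
  | [], _ => 1
  | (f :: fs), t => ∫ s in (0 : ℝ)..t, f s * II fs s

/-- The linear extension of the iterated integral to formal `ℂ`-linear
combinations of words. -/
noncomputable def IIlin (F : List (ℝ → ℂ) →₀ ℂ) (t : ℝ) : ℂ :=
  F.sum fun w c => c * II w t

open MeasureTheory

theorem perm_of_mem_support_sh :
    ∀ {u v w : List (ℝ → ℂ)}, w ∈ (sh u v).support → w.Perm (u ++ v)
  | [], v, w, hw => by
    rw [sh] at hw
    simp [Finset.mem_singleton.1 (Finsupp.support_single_subset hw)]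
  | (a :: u), [], w, hw => by
    rw [sh] at hw
    simp [Finset.mem_singleton.1 (Finsupp.support_single_subset hw)]
  | (a :: u), (b :: v), w, hw => by
    classical
    rw [sh] at hw
    rcases Finset.mem_union.1 (Finsupp.support_add hw) with hw | hw
    · obtain ⟨w', hw', rfl⟩ := Finset.mem_image.1 (Finsupp.mapDomain_support hw)
      exact (perm_of_mem_support_sh hw').cons a
    · obtain ⟨w', hw', rfl⟩ := Finset.mem_image.1 (Finsupp.mapDomain_support hw)
      exact ((perm_of_mem_support_sh hw').cons b).trans List.perm_middle.symm
termination_by u v => u.length + v.length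

theorem II_nil (t : ℝ) : II [] t = 1 := rfl

theorem II_cons_zero (f : ℝ → ℂ) (fs : List (ℝ → ℂ)) : II (f :: fs) 0 = 0 :=
  intervalIntegral.integral_same

theorem hasDerivAt_II_cons {f : ℝ → ℂ} {fs : List (ℝ → ℂ)} (hf : Continuous f)
    (hfs : Continuous (II fs)) (t : ℝ) : HasDerivAt (II (f :: fs)) (f t * II fs t) t :=
  ((hf.mul hfs).integral_hasStrictDerivAt 0 t).hasDerivAt

theorem continuous_II_cons {f : ℝ → ℂ} {fs : List (ℝ → ℂ)} (hf : Continuous f)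
    (hfs : Continuous (II fs)) : Continuous (II (f :: fs)) :=
  continuous_iff_continuousAt.2 fun t => (hasDerivAt_II_cons hf hfs t).continuousAt

theorem continuous_II : ∀ {w : List (ℝ → ℂ)}, (∀ f ∈ w, Continuous f) → Continuous (II w)
  | [], _ => continuous_const
  | (_ :: _), h => continuous_II_cons (h _ List.mem_cons_self)
      (continuous_II fun g hg => h g (List.mem_cons_of_mem _ hg))

theorem continuous_II_of_mem_support_sh {u v w : List (ℝ → ℂ)}
    (h : ∀ f ∈ u ++ v, Continuous f) (hw : w ∈ (sh u v).support) : Continuous (II w) :=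
  continuous_II fun f hf => h f ((perm_of_mem_support_sh hw).subset hf)

theorem II_cons_mul_II_cons {a b : ℝ → ℂ} {u v : List (ℝ → ℂ)} (ha : Continuous a)
    (hb : Continuous b) (hu : Continuous (II u)) (hv : Continuous (II v)) (t : ℝ) :
    II (a :: u) t * II (b :: v) t =
      (∫ s in (0 : ℝ)..t, a s * (II u s * II (b :: v) s)) +
        ∫ s in (0 : ℝ)..t, b s * (II (a :: u) s * II v s) := by
  have hau := continuous_II_cons ha hu
  have hbv := continuous_II_cons hb hv
  have hFTC := intervalIntegral.integral_deriv_mul_eq_sub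
    (fun s _ => hasDerivAt_II_cons ha hu s) (fun s _ => hasDerivAt_II_cons hb hv s)
    ((ha.mul hu).intervalIntegrable 0 t) ((hb.mul hv).intervalIntegrable 0 t)
  rw [II_cons_zero, zero_mul, sub_zero] at hFTC
  rw [← hFTC, intervalIntegral.integral_add]
  · congr 1 <;> exact intervalIntegral.integral_congr fun s _ => by ring
  · exact ((ha.mul hu).mul hbv).intervalIntegrable 0 t
  · exact (hau.mul (hb.mul hv)).intervalIntegrable 0 t

theorem IIlin_add (F G : List (ℝ → ℂ) →₀ ℂ) (t : ℝ) :
    IIlin (F + G) t = IIlin F t + IIlin G t :=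
  Finsupp.sum_add_index' (fun _ => zero_mul _) (fun _ _ _ => add_mul _ _ _)

theorem IIlin_single_one (w : List (ℝ → ℂ)) (t : ℝ) :
    IIlin (Finsupp.single w 1) t = II w t := by
  simp [IIlin]

theorem IIlin_mapDomain_cons (a : ℝ → ℂ) {F : List (ℝ → ℂ) →₀ ℂ} {t : ℝ}
    (hF : ∀ w ∈ F.support, IntervalIntegrable (fun s => a s * II w s) volume 0 t) :
    IIlin (Finsupp.mapDomain (a :: ·) F) t = ∫ s in (0 : ℝ)..t, a s * IIlin F s := by
  calc IIlin (Finsupp.mapDomain (a :: ·) F) t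
      = ∑ w ∈ F.support, F w * ∫ s in (0 : ℝ)..t, a s * II w s :=
        Finsupp.sum_mapDomain_index (fun _ => zero_mul _) (fun _ _ _ => add_mul _ _ _)
    _ = ∑ w ∈ F.support, ∫ s in (0 : ℝ)..t, F w * (a s * II w s) := by
        simp only [intervalIntegral.integral_const_mul]
    _ = ∫ s in (0 : ℝ)..t, a s * IIlin F s := by
        rw [← intervalIntegral.integral_finsetSum fun w hw => (hF w hw).const_mul (F w)]
        refine intervalIntegral.integral_congr fun s _ => ?_
        simp only [IIlin, Finsupp.sum, Finset.mul_sum]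
        exact Finset.sum_congr rfl fun w _ => by ring

/-- the iterated integral is a shuffle homomorphism:
`∫ (w₁ ⧢ w₂) = (∫ w₁)·(∫ w₂)`. -/
theorem iteratedIntegral_shuffle (w₁ w₂ : List (ℝ → ℂ))
    (h : ∀ f ∈ w₁ ++ w₂, Continuous f) (t : ℝ) :
    IIlin (sh w₁ w₂) t = II w₁ t * II w₂ t := by
  induction w₁ generalizing w₂ t with
  | nil => rw [sh, IIlin_single_one, II_nil, one_mul]
  | cons a u ihu =>
    induction w₂ generalizing t with
    | nil => rw [sh, IIlin_single_one, II_nil, mul_one]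
    | cons b v ihv =>
      have ha : Continuous a := h a List.mem_cons_self
      have hb : Continuous b := h b (by simp)
      have hu : ∀ f ∈ u ++ b :: v, Continuous f := fun f hf => h f (List.mem_cons_of_mem a hf)
      have hv : ∀ f ∈ a :: u ++ v, Continuous f := fun f hf => h f (by
        simp only [List.mem_append, List.mem_cons] at hf ⊢; tauto)
      rw [sh, IIlin_add,
        IIlin_mapDomain_cons a fun w hw =>
          (ha.mul (continuous_II_of_mem_support_sh hu hw)).intervalIntegrable 0 t,
        IIlin_mapDomain_cons b fun w hw =>
          (hb.mul (continuous_II_of_mem_support_sh hv hw)).intervalIntegrable 0 t]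
      simp only [ihu (b :: v) hu, ihv hv]
      exact (II_cons_mul_II_cons ha hb (continuous_II fun f hf => hu f (List.mem_append_left _ hf))
        (continuous_II fun f hf => hv f (List.mem_append_right _ hf)) t).symm

end IterIntShuffle
end

section
/- For indices (k₁,…,k_i) and (l₁,…,l_j), the harmonic product satisfies the expansion (k₁,…,k_i)*(l₁,…,l_j) = ∑_{p=0}^{j−1} [(l₁,…,l_p,k₁)·((k₂,…,k_i)*(l_{p+1},…,l_j)) + (l₁,…,l_p,k₁+l_{p+1})·((k₂,…,k_i)*(l_{p+2},…,l_j))] + (l₁,…,l_j,k₁,…,k_i). -/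
/-! Induction on the second index. Unfolding the recursion for `(k₁,…) * (l₁,…)` once, the
terms headed by `k₁` and `k₁ + l₁` form the `p = 0` summand, while the term headed by `l₁` is
`(l₁)·` applied to the expansion for `(l₂,…,l_j)`, which supplies the summands `p ≥ 1` and the
final concatenation. -/

namespace HarmonicStmt

/-- The harmonic (quasi-shuffle) product of two indices. -/
noncomputable def hp : List ℕ+ → List ℕ+ → (List ℕ+ →₀ ℂ)
  | [], w => Finsupp.single w 1
  | (a :: u), [] => Finsupp.single (a :: u) 1
  | (a :: u), (b :: v) =>
      Finsupp.mapDomain (a :: ·) (hp u (b :: v)) +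
      Finsupp.mapDomain (b :: ·) (hp (a :: u) v) +
      Finsupp.mapDomain ((a + b) :: ·) (hp u v)
termination_by u v => u.length + v.length

open Finsupp

lemma hp_cons_nil (a : ℕ+) (u : List ℕ+) : hp (a :: u) [] = single (a :: u) 1 := by
  rw [hp]

lemma hp_cons_cons (a b : ℕ+) (u v : List ℕ+) :
    hp (a :: u) (b :: v) =
      mapDomain (a :: ·) (hp u (b :: v)) + mapDomain (b :: ·) (hp (a :: u) v) +
        mapDomain ((a + b) :: ·) (hp u v) := by
  rw [hp]

lemma mapDomain_cons_mapDomain_append {α M : Type*} [AddCommMonoid M] (b : α) (l : List α)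
    (g : List α → List α) (f : List α →₀ M) :
    mapDomain (b :: ·) (mapDomain (fun w => l ++ g w) f) =
      mapDomain (fun w => (b :: l) ++ g w) f := by
  rw [← mapDomain_comp]
  rfl

noncomputable def expansionTerm (k₁ : ℕ+) (ks ls : List ℕ+) (p : ℕ) : List ℕ+ →₀ ℂ :=
  mapDomain (fun w => ls.take p ++ k₁ :: w) (hp ks (ls.drop p)) +
    mapDomain (fun w => ls.take p ++ (k₁ + ls.getD p 1) :: w) (hp ks (ls.drop (p + 1)))

lemma expansionTerm_cons_zero (k₁ b : ℕ+) (ks v : List ℕ+) :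
    expansionTerm k₁ ks (b :: v) 0 =
      mapDomain (k₁ :: ·) (hp ks (b :: v)) + mapDomain ((k₁ + b) :: ·) (hp ks v) :=
  rfl

lemma expansionTerm_cons_succ (k₁ b : ℕ+) (ks v : List ℕ+) (p : ℕ) :
    expansionTerm k₁ ks (b :: v) (p + 1) = mapDomain (b :: ·) (expansionTerm k₁ ks v p) := by
  simp only [expansionTerm, mapDomain_add, mapDomain_cons_mapDomain_append]
  rfl

lemma hp_cons_eq_sum_expansionTerm (k₁ : ℕ+) (ks ls : List ℕ+) :
    hp (k₁ :: ks) ls =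
      (∑ p ∈ Finset.range ls.length, expansionTerm k₁ ks ls p) + single (ls ++ k₁ :: ks) 1 := by
  induction ls with
  | nil => simp [hp_cons_nil]
  | cons b v ih =>
    calc hp (k₁ :: ks) (b :: v)
        = expansionTerm k₁ ks (b :: v) 0 + mapDomain (b :: ·) (hp (k₁ :: ks) v) := by
          rw [hp_cons_cons, expansionTerm_cons_zero, add_right_comm]
      _ = expansionTerm k₁ ks (b :: v) 0 +
            ((∑ p ∈ Finset.range v.length, expansionTerm k₁ ks (b :: v) (p + 1)) +
              single (b :: v ++ k₁ :: ks) 1) := by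
          simp only [ih, mapDomain_add, mapDomain_finsetSum, mapDomain_single,
            expansionTerm_cons_succ, List.cons_append]
      _ = _ := by
          rw [List.length_cons, Finset.sum_range_succ', ← add_assoc, add_comm _ (expansionTerm ..)]

/-- the expansion
`(k₁,…,k_i)*(l₁,…,l_j) = ∑_{p=0}^{j−1} [(l₁,…,l_p,k₁)·((k₂,…,k_i)*(l_{p+1},…,l_j))
+ (l₁,…,l_p,k₁+l_{p+1})·((k₂,…,k_i)*(l_{p+2},…,l_j))] + (l₁,…,l_j,k₁,…,k_i)`. -/
theorem harmonic_expansion (k₁ : ℕ+) (ks ls : List ℕ+) :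
    hp (k₁ :: ks) ls =
      (∑ p ∈ Finset.range ls.length,
        (Finsupp.mapDomain (fun w => ls.take p ++ k₁ :: w) (hp ks (ls.drop p)) +
          Finsupp.mapDomain (fun w => ls.take p ++ (k₁ + ls.getD p 1) :: w)
            (hp ks (ls.drop (p + 1)))))
        + Finsupp.single (ls ++ k₁ :: ks) 1 :=
  hp_cons_eq_sum_expansionTerm k₁ ks ls

end HarmonicStmt
end

section
/- For |z₁|, |z₂| < 1, the identity Li_{1,1}(1,1;z₁,z₂) = Li₁(z₂)·Li₁(z₁) − Li_{1,1}(1,1;z₂,z₁) − Li₂(z₁z₂) holds, where Li_{1,1}(1,1;z₁,z₂) = ∑_{m>n>0} z₁^m z₂^n/(mn), Li₁(z) = −log(1−z) = ∑_{n>0} z^n/n, and Li₂(z) = ∑_{n>0} z^n/n². -/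
theorem aux_norm_summable (z : ℂ) (hz : ‖z‖ < 1) :
    Summable fun n : ℕ+ => ‖z ^ (n:ℕ) / (n:ℂ)‖ := by
  have h : Summable fun n : ℕ => ‖z‖ ^ n := summable_geometric_of_lt_one (norm_nonneg _) hz
  have h2 : Summable fun n : ℕ+ => ‖z‖ ^ (n:ℕ) :=
    h.comp_injective (fun a b h => PNat.coe_injective h)
  refine h2.of_nonneg_of_le (fun n => norm_nonneg _) fun n => ?_
  rw [norm_div, norm_pow]
  have h1 : (1:ℝ) ≤ ‖(n:ℂ)‖ := by
    rw [Complex.norm_natCast]; exact_mod_cast n.one_le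
  calc ‖z‖ ^ (n:ℕ) / ‖(n:ℂ)‖ ≤ ‖z‖ ^ (n:ℕ) / 1 := by
        apply div_le_div_of_nonneg_left ?_ ?_ h1 |>.trans_eq rfl
        · positivity
        · norm_num
    _ = ‖z‖ ^ (n:ℕ) := div_one _

def pSwap : {p : ℕ+ × ℕ+ // p.2 < p.1} ≃ {p : ℕ+ × ℕ+ // p.1 < p.2} where
  toFun q := ⟨(q.1.2, q.1.1), q.2⟩
  invFun q := ⟨(q.1.2, q.1.1), q.2⟩
  left_inv _ := rfl
  right_inv _ := rfl

def pDiag : ℕ+ ≃ {p : ℕ+ × ℕ+ // p.1 = p.2} where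
  toFun n := ⟨(n, n), rfl⟩
  invFun q := q.1.1
  left_inv _ := rfl
  right_inv q := Subtype.ext (Prod.ext rfl q.2)

/-- For `|z₁|, |z₂| < 1`,
`Li_{1,1}(1,1;z₁,z₂) = Li₁(z₂)·Li₁(z₁) − Li_{1,1}(1,1;z₂,z₁) − Li₂(z₁z₂)`. -/
theorem double_polylog_identity (z₁ z₂ : ℂ) (hz₁ : ‖z₁‖ < 1) (hz₂ : ‖z₂‖ < 1) :
    (∑' p : {p : ℕ+ × ℕ+ // p.2 < p.1},
        z₁ ^ (p.1.1 : ℕ) * z₂ ^ (p.1.2 : ℕ) / ((p.1.1 : ℂ) * (p.1.2 : ℂ))) =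
      (∑' n : ℕ+, z₂ ^ (n : ℕ) / (n : ℂ)) * (∑' n : ℕ+, z₁ ^ (n : ℕ) / (n : ℂ))
        - (∑' p : {p : ℕ+ × ℕ+ // p.2 < p.1},
            z₂ ^ (p.1.1 : ℕ) * z₁ ^ (p.1.2 : ℕ) / ((p.1.1 : ℂ) * (p.1.2 : ℂ)))
        - (∑' n : ℕ+, (z₁ * z₂) ^ (n : ℕ) / (n : ℂ) ^ 2) := by
  classical
  set a : ℕ+ → ℂ := fun n => z₂ ^ (n:ℕ) / (n:ℂ) with ha
  set b : ℕ+ → ℂ := fun n => z₁ ^ (n:ℕ) / (n:ℂ) with hb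
  have hna := aux_norm_summable z₂ hz₂
  have hnb := aux_norm_summable z₁ hz₁
  set f : ℕ+ × ℕ+ → ℂ := fun p => a p.1 * b p.2 with hf
  have hsf : Summable f := summable_mul_of_summable_norm hna hnb
  have hprod : (∑' n : ℕ+, a n) * (∑' n : ℕ+, b n) = ∑' p : ℕ+ × ℕ+, f p :=
    tsum_mul_tsum_of_summable_norm hna hnb
  set s : Set (ℕ+ × ℕ+) := {p | p.2 < p.1} with hs
  set t : Set (ℕ+ × ℕ+) := {p | p.1 < p.2} with ht
  set d : Set (ℕ+ × ℕ+) := {p | p.1 = p.2} with hd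
  have hdecomp : ∀ p, f p = s.indicator f p + t.indicator f p + d.indicator f p := by
    intro p
    by_cases h1 : p.2 < p.1
    · rw [Set.indicator_of_mem (show p ∈ s from h1) f,
        Set.indicator_of_notMem (show p ∉ t from not_lt.2 h1.le) f,
        Set.indicator_of_notMem (show p ∉ d from fun e => absurd (e ▸ h1) (lt_irrefl _)) f]
      ring
    · by_cases h2 : p.1 < p.2
      · rw [Set.indicator_of_notMem (show p ∉ s from h1) f,
          Set.indicator_of_mem (show p ∈ t from h2) f,
          Set.indicator_of_notMem (show p ∉ d from fun e => absurd (e ▸ h2) (lt_irrefl _)) f]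
        ring
      · have h3 : p.1 = p.2 := le_antisymm (not_lt.1 h1) (not_lt.1 h2)
        rw [Set.indicator_of_notMem (show p ∉ s from h1) f,
          Set.indicator_of_notMem (show p ∉ t from h2) f,
          Set.indicator_of_mem (show p ∈ d from h3) f]
        ring
  have hsum_s := hsf.indicator s
  have hsum_t := hsf.indicator t
  have hsum_d := hsf.indicator d
  have hsplit : ∑' p, f p = (∑' p, s.indicator f p) + (∑' p, t.indicator f p)
      + (∑' p, d.indicator f p) := by
    calc ∑' p, f p = ∑' p, (s.indicator f p + t.indicator f p + d.indicator f p) :=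
          tsum_congr hdecomp
      _ = _ := by
          rw [Summable.tsum_add (hsum_s.add hsum_t) hsum_d, Summable.tsum_add hsum_s hsum_t]
  have hsS : (∑' p, s.indicator f p) = ∑' p : {p : ℕ+ × ℕ+ // p.2 < p.1},
      z₂ ^ (p.1.1 : ℕ) * z₁ ^ (p.1.2 : ℕ) / ((p.1.1 : ℂ) * (p.1.2 : ℂ)) := by
    rw [← tsum_subtype]
    exact tsum_congr fun p => by simp [hf, ha, hb, div_mul_div_comm]
  have hsT : (∑' p, t.indicator f p) = ∑' p : {p : ℕ+ × ℕ+ // p.2 < p.1},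
      z₁ ^ (p.1.1 : ℕ) * z₂ ^ (p.1.2 : ℕ) / ((p.1.1 : ℂ) * (p.1.2 : ℂ)) := by
    calc (∑' p, t.indicator f p) = ∑' x : t, f x := (tsum_subtype t f).symm
      _ = ∑' q : {p : ℕ+ × ℕ+ // p.2 < p.1}, f (pSwap q) :=
          (pSwap.tsum_eq (fun x : {p : ℕ+ × ℕ+ // p.1 < p.2} => f x)).symm
      _ = _ := tsum_congr fun q => by
          simp only [hf, ha, hb, pSwap, Equiv.coe_fn_mk]
          ring
  have hsD : (∑' p, d.indicator f p) = ∑' n : ℕ+, (z₁ * z₂) ^ (n:ℕ) / (n : ℂ) ^ 2 := by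
    calc (∑' p, d.indicator f p) = ∑' x : d, f x := (tsum_subtype d f).symm
      _ = ∑' n : ℕ+, f (pDiag n) :=
          (pDiag.tsum_eq (fun x : {p : ℕ+ × ℕ+ // p.1 = p.2} => f x)).symm
      _ = _ := tsum_congr fun n => by
          simp only [hf, ha, hb, pDiag, Equiv.coe_fn_mk]
          ring
  rw [hprod, hsplit, hsS, hsT, hsD]
  ring
end

section
/- For |z₁|, |z₂| < 1 and integers k₁,…,k_i ≥ 1, l₁,…,l_j ≥ 1, the product of one-variable multiple polylogarithms satisfies the stuffle expansion Li_{k₁,…,k_i}(z₁)·Li_{l₁,…,l_j}(z₂) = ∑_{𝐤} c_𝐤 · Li_𝐤, where the sum runs over the terms 𝐤 of the harmonic product (k₁,…,k_i)*(l₁,…,l_j) with multiplicities c_𝐤, and each Li_𝐤 is the corresponding 2-variable multiple polylogarithm: its summation variables n₁ > ⋯ > n_{|𝐤|} > 0 weight z₁ at the position of the block coming from the k-index and z₂ at the position coming from the l-index (z₁z₂ on merged entries). -/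
namespace StuffleStmt

/-- A colored index letter: an exponent `k ∈ ℕ+` together with the variable weight
(`z₁`, `z₂`, `z₁z₂` on merged entries, or `1` for unweighted positions). -/
abbrev C := ℕ+ × ℂ

/-- The colored harmonic (quasi-shuffle) product: on merged entries the exponents
add and the variable weights multiply (`z₁` and `z₂` merge to `z₁z₂`). -/
noncomputable def hp2 : List C → List C → (List C →₀ ℂ)
  | [], w => Finsupp.single w 1
  | (a :: u), [] => Finsupp.single (a :: u) 1
  | (a :: u), (b :: v) =>
      Finsupp.mapDomain (a :: ·) (hp2 u (b :: v)) +
      Finsupp.mapDomain (b :: ·) (hp2 (a :: u) v) +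
      Finsupp.mapDomain ((((a.1 + b.1 : ℕ+), a.2 * b.2) : C) :: ·) (hp2 u v)
termination_by u v => u.length + v.length

/-- The multiple polylogarithm series attached to a colored index
`c = ((k₁,x₁),…,(k_r,x_r))`:
`∑_{n₁>⋯>n_r>0} ∏_t x_t^{n_t} / n_t^{k_t}`.
For `c = colorize z₁ ks` this is `Li_{ks}(z₁)`, and for the terms `𝐤` of the colored
harmonic product it is the corresponding two-variable multiple polylogarithm
(`z₁` weighting the position of the block coming from the `k`-index, `z₂` that
coming from the `l`-index, and `z₁z₂` merged entries). -/
noncomputable def GLi (c : List C) : ℂ :=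
  ∑' n : {n : Fin c.length → ℕ // StrictAnti n ∧ ∀ t, 0 < n t},
    ∏ t : Fin c.length, ((c.get t).2 ^ (n.1 t) / ((n.1 t : ℂ)) ^ ((c.get t).1 : ℕ))

/-- Color an index `(k₁,…,k_i)` with main variable `z`: the first entry carries the
weight `z` (giving the factor `z^{n₁}`) and the remaining entries carry weight `1`. -/
noncomputable def colorize (z : ℂ) : List ℕ+ → List C
  | [] => []
  | (k :: ks) => (k, z) :: ks.map (fun k' => ((k', 1) : C))

/-!
Truncate every series at `n₁ < N`. For the truncations the stuffle identity is finite
bookkeeping: splitting the product of the two outermost sums over `(m, n)` into `m > n`,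
`m < n` and `m = n` reproduces the three terms of the recursion defining `hp2`, so it follows
by induction on the total length. If the first weight has norm `< 1` and all others norm `≤ 1`,
every term is bounded by `‖x₁‖ ^ n₁`, which makes the series absolutely convergent and the
truncations converge to it. These conditions pass to every word of the quasi-shuffle, so
`N → ∞` can be taken on both sides.
-/

open Finset Filter Topology

noncomputable def letterTerm (a : C) (n : ℕ) : ℂ := a.2 ^ n / (n : ℂ) ^ (a.1 : ℕ)

noncomputable def chainTerm (c : List C) (n : Fin c.length → ℕ) : ℂ :=
  ∏ t, letterTerm (c.get t) (n t)

open Classical in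
noncomputable def chainsBelow (r N : ℕ) : Finset (Fin r → ℕ) :=
  {n ∈ Fintype.piFinset fun _ => range N | StrictAnti n ∧ ∀ t, 0 < n t}

noncomputable def GLiTrunc (c : List C) (N : ℕ) : ℂ :=
  ∑ n ∈ chainsBelow c.length N, chainTerm c n

lemma letterTerm_merge (a b : C) (n : ℕ) :
    letterTerm ((a.1 + b.1, a.2 * b.2) : C) n = letterTerm a n * letterTerm b n := by
  simp only [letterTerm, PNat.add_coe, mul_pow, pow_add]
  ring

lemma chainTerm_cons (a : C) (c : List C) (x : ℕ) (g : Fin c.length → ℕ) :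
    chainTerm (a :: c) (Fin.cons x g) = letterTerm a x * chainTerm c g :=
  Fin.prod_univ_succ _

lemma Fin.strictAnti_cons {α : Type*} [Preorder α] {r : ℕ} {x : α} {g : Fin r → α} :
    StrictAnti (Fin.cons x g : Fin (r + 1) → α) ↔ (∀ t, g t < x) ∧ StrictAnti g :=
  Fin.liftFun_cons (· > ·)

lemma cons_mem_chainsBelow_iff {r N x : ℕ} {g : Fin r → ℕ} :
    Fin.cons x g ∈ chainsBelow (r + 1) N ↔ x ∈ Ico 1 N ∧ g ∈ chainsBelow r x := by
  simp only [chainsBelow, mem_filter, Fintype.mem_piFinset, mem_range, mem_Ico,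
    Fin.strictAnti_cons, Fin.forall_fin_succ, Fin.cons_zero, Fin.cons_succ]
  constructor
  · rintro ⟨⟨hxN, -⟩, ⟨hgx, hg⟩, hx, hgpos⟩
    exact ⟨⟨hx, hxN⟩, hgx, hg, hgpos⟩
  · rintro ⟨⟨hx, hxN⟩, hgx, hg, hgpos⟩
    exact ⟨⟨hxN, fun t => (hgx t).trans hxN⟩, ⟨hgx, hg⟩, hx, hgpos⟩

lemma sum_chainsBelow_succ {r N : ℕ} (F : (Fin (r + 1) → ℕ) → ℂ) :
    ∑ n ∈ chainsBelow (r + 1) N, F n =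
      ∑ x ∈ Ico 1 N, ∑ g ∈ chainsBelow r x, F (Fin.cons x g) := by
  let e := Fin.consEquiv fun _ : Fin (r + 1) => ℕ
  rw [← sum_finset_product' ((chainsBelow (r + 1) N).map e.symm.toEmbedding), sum_map]
  · simp [e]
  · rintro ⟨x, g⟩
    exact mem_map_equiv.trans cons_mem_chainsBelow_iff

lemma GLiTrunc_nil (N : ℕ) : GLiTrunc [] N = 1 := by
  simp [GLiTrunc, chainsBelow, chainTerm, Subsingleton.strictAnti]

lemma GLiTrunc_cons (a : C) (c : List C) (N : ℕ) :
    GLiTrunc (a :: c) N = ∑ m ∈ Ico 1 N, letterTerm a m * GLiTrunc c m := by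
  simp only [GLiTrunc, List.length_cons, sum_chainsBelow_succ, chainTerm_cons, mul_sum]

lemma sum_Ico_mul_sum_Ico {R : Type*} [CommRing R] (f g : ℕ → R) (N : ℕ) :
    (∑ m ∈ Ico 1 N, f m) * (∑ n ∈ Ico 1 N, g n) =
      (∑ m ∈ Ico 1 N, f m * ∑ n ∈ Ico 1 m, g n) +
      (∑ n ∈ Ico 1 N, g n * ∑ m ∈ Ico 1 n, f m) +
      ∑ m ∈ Ico 1 N, f m * g m := by
  induction N with
  | zero => simp
  | succ N ih =>
    rcases Nat.eq_zero_or_pos N with rfl | hN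
    · simp
    simp only [sum_Ico_succ_top hN]
    linear_combination ih

lemma sum_mapDomain_cons (a : C) (s : List C →₀ ℂ) (N : ℕ) :
    (Finsupp.mapDomain (a :: ·) s).sum (fun w c => c * GLiTrunc w N) =
      ∑ m ∈ Ico 1 N, letterTerm a m * s.sum (fun w c => c * GLiTrunc w m) := by
  rw [Finsupp.sum_mapDomain_index (fun _ => zero_mul _) (fun _ _ _ => add_mul _ _ _)]
  simp only [GLiTrunc_cons, Finsupp.sum, mul_sum]
  rw [sum_comm]
  exact sum_congr rfl fun _ _ => sum_congr rfl fun _ _ => by ring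

theorem GLiTrunc_mul : ∀ (u v : List C) (N : ℕ),
    GLiTrunc u N * GLiTrunc v N = (hp2 u v).sum fun w c => c * GLiTrunc w N
  | [], v, N => by
    rw [hp2, Finsupp.sum_single_index (zero_mul _), GLiTrunc_nil, one_mul]
  | a :: u, [], N => by
    rw [hp2, Finsupp.sum_single_index (zero_mul _), GLiTrunc_nil, one_mul, mul_one]
  | a :: u, b :: v, N => by
    rw [hp2, Finsupp.sum_add_index' (fun _ => zero_mul _) (fun _ _ _ => add_mul _ _ _),
      Finsupp.sum_add_index' (fun _ => zero_mul _) (fun _ _ _ => add_mul _ _ _),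
      sum_mapDomain_cons, sum_mapDomain_cons, sum_mapDomain_cons,
      GLiTrunc_cons a, GLiTrunc_cons b, sum_Ico_mul_sum_Ico]
    congr 1
    congr 1
    · refine sum_congr rfl fun m _ => ?_
      rw [← GLiTrunc_cons, mul_assoc, GLiTrunc_mul u (b :: v) m]
    · refine sum_congr rfl fun n _ => ?_
      rw [← GLiTrunc_cons, mul_assoc, mul_comm (GLiTrunc v n), GLiTrunc_mul (a :: u) v n]
    · refine sum_congr rfl fun m _ => ?_
      rw [letterTerm_merge, ← GLiTrunc_mul u v m]
      ring
termination_by u v => u.length + v.length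

def Admissible (c : List C) : Prop :=
  (∀ x ∈ c, ‖x.2‖ ≤ 1) ∧ ∀ x ∈ c.head?, ‖x.2‖ < 1

lemma summable_prod_pow {q : ℝ} (hq₀ : 0 ≤ q) (hq₁ : q < 1) (r : ℕ) :
    Summable fun n : Fin r → ℕ => ∏ t, q ^ n t := by
  induction r with
  | zero => exact Summable.of_finite
  | succ r ih =>
    have hprod := (summable_geometric_of_lt_one hq₀ hq₁).mul_of_nonneg ih
      (fun _ => by positivity) (fun _ => by positivity)
    refine (Equiv.summable_iff (Fin.consEquiv fun _ => ℕ)).mp (hprod.congr fun p => ?_)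
    simp [Fin.prod_univ_succ]

lemma norm_letterTerm_le (a : C) {n : ℕ} (hn : 0 < n) : ‖letterTerm a n‖ ≤ ‖a.2‖ ^ n := by
  rw [letterTerm, norm_div, norm_pow, norm_pow, Complex.norm_natCast]
  exact div_le_self (by positivity) (one_le_pow₀ (by exact_mod_cast hn))

lemma norm_chainTerm_cons_le {a : C} {c : List C} (hc : ∀ x ∈ c, ‖x.2‖ ≤ 1)
    {n : Fin (c.length + 1) → ℕ} (hn : ∀ t, 0 < n t) :
    ‖chainTerm (a :: c) n‖ ≤ ‖a.2‖ ^ n 0 := by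
  rw [← Fin.cons_self_tail n, chainTerm_cons, norm_mul, chainTerm, norm_prod]
  refine (mul_le_of_le_one_right (norm_nonneg _) ?_).trans (norm_letterTerm_le a (hn 0))
  refine prod_le_one (fun _ _ => norm_nonneg _) fun t _ => ?_
  exact (norm_letterTerm_le _ (hn t.succ)).trans (pow_le_one₀ (norm_nonneg _) (hc _ (c.get_mem t)))

/-- Along a chain `n₀ > n₁ > ⋯`, the bound `q ^ n₀` is dominated by the summable product
`∏ ρ ^ nₜ` with `ρ ^ (r + 1) = q`. -/
lemma summable_chainTerm {c : List C} (hc : Admissible c) :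
    Summable fun n : {n : Fin c.length → ℕ // StrictAnti n ∧ ∀ t, 0 < n t} => chainTerm c n := by
  obtain ⟨hle, hhead⟩ := hc
  cases c with
  | nil =>
    exact Summable.of_finite
      (f := fun n : {n : Fin 0 → ℕ // StrictAnti n ∧ ∀ t, 0 < n t} => chainTerm [] n)
  | cons a c =>
    set q := ‖a.2‖
    have hq₁ : q < 1 := hhead a rfl
    set ρ : ℝ := q ^ ((c.length + 1 : ℕ)⁻¹ : ℝ)
    have hρ₀ : 0 ≤ ρ := by positivity
    have hρ₁ : ρ < 1 := Real.rpow_lt_one (norm_nonneg _) hq₁ (by positivity)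
    have hρq : ρ ^ (c.length + 1) = q := Real.rpow_inv_natCast_pow (norm_nonneg _) (by omega)
    refine ((summable_prod_pow hρ₀ hρ₁ _).subtype _).of_norm_bounded fun n => ?_
    refine (norm_chainTerm_cons_le (fun x hx => hle x (List.mem_cons_of_mem a hx)) n.2.2).trans ?_
    calc q ^ n.1 0 = ρ ^ ((c.length + 1) * n.1 0) := by rw [pow_mul, hρq]
      _ ≤ ρ ^ ∑ t, n.1 t := by
        refine pow_le_pow_of_le_one hρ₀ hρ₁.le ?_
        calc ∑ t, n.1 t ≤ ∑ _t : Fin (c.length + 1), n.1 0 :=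
              sum_le_sum fun t _ => n.2.1.antitone (Fin.zero_le t)
          _ = _ := by simp
      _ = ∏ t, ρ ^ n.1 t := (prod_pow_eq_pow_sum _ _ _).symm

theorem tendsto_GLiTrunc {c : List C} (hc : Admissible c) :
    Tendsto (GLiTrunc c) atTop (𝓝 (GLi c)) := by
  classical
  set s : Set (Fin c.length → ℕ) := {n | StrictAnti n ∧ ∀ t, 0 < n t}
  have hsum : HasSum (s.indicator (chainTerm c)) (GLi c) :=
    hasSum_subtype_iff_indicator.mp (summable_chainTerm hc).hasSum
  have hmono : Monotone fun N => Fintype.piFinset fun _ : Fin c.length => range N :=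
    fun M N hMN => Fintype.piFinset_subset _ _ fun _ => range_subset_range.mpr hMN
  have hexhaust : ∀ n : Fin c.length → ℕ, ∃ N, n ∈ Fintype.piFinset fun _ => range N :=
    fun n => ⟨univ.sup n + 1, Fintype.mem_piFinset.mpr fun t =>
      mem_range.mpr (Nat.lt_succ_of_le (le_sup (mem_univ t)))⟩
  refine (hsum.comp (tendsto_atTop_finset_of_monotone hmono hexhaust)).congr fun N => ?_
  simp [GLiTrunc, chainsBelow, sum_filter, Set.indicator_apply, s]

lemma hp2_nil_left (v : List C) : hp2 [] v = Finsupp.single v 1 := by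
  rw [hp2]

lemma hp2_nil_right (u : List C) : hp2 u [] = Finsupp.single u 1 := by
  cases u <;> rw [hp2]

lemma mem_support_hp2_cons_cons {a b : C} {u v w : List C}
    (hw : w ∈ (hp2 (a :: u) (b :: v)).support) :
    (∃ w' ∈ (hp2 u (b :: v)).support, w = a :: w') ∨
      (∃ w' ∈ (hp2 (a :: u) v).support, w = b :: w') ∨
      ∃ w' ∈ (hp2 u v).support, w = ((a.1 + b.1, a.2 * b.2) : C) :: w' := by
  rw [hp2] at hw
  rcases mem_union.mp (Finsupp.support_add hw) with hw | hw
  · rcases mem_union.mp (Finsupp.support_add hw) with hw | hw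
    · exact .inl (by simpa [eq_comm] using Finsupp.mapDomain_support hw)
    · exact .inr (.inl (by simpa [eq_comm] using Finsupp.mapDomain_support hw))
  · exact .inr (.inr (by simpa [eq_comm] using Finsupp.mapDomain_support hw))

theorem forall_mem_of_mem_support_hp2 (P : C → Prop)
    (hP : ∀ a b, P a → P b → P ((a.1 + b.1, a.2 * b.2) : C)) :
    ∀ (u v : List C), (∀ x ∈ u, P x) → (∀ x ∈ v, P x) → ∀ w ∈ (hp2 u v).support, ∀ x ∈ w, P x
  | [], v, _, hv, w, hw => by
    rw [hp2_nil_left] at hw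
    rwa [mem_singleton.mp (Finsupp.support_single_subset hw)]
  | a :: u, [], hu, _, w, hw => by
    rw [hp2_nil_right] at hw
    rwa [mem_singleton.mp (Finsupp.support_single_subset hw)]
  | a :: u, b :: v, hu, hv, w, hw => by
    have hu' := fun x hx => hu x (List.mem_cons_of_mem a hx)
    have hv' := fun x hx => hv x (List.mem_cons_of_mem b hx)
    rcases mem_support_hp2_cons_cons hw with ⟨w', hw', rfl⟩ | ⟨w', hw', rfl⟩ | ⟨w', hw', rfl⟩
    · exact List.forall_mem_cons.mpr ⟨hu a List.mem_cons_self,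
        forall_mem_of_mem_support_hp2 P hP u (b :: v) hu' hv w' hw'⟩
    · exact List.forall_mem_cons.mpr ⟨hv b List.mem_cons_self,
        forall_mem_of_mem_support_hp2 P hP (a :: u) v hu hv' w' hw'⟩
    · exact List.forall_mem_cons.mpr ⟨hP a b (hu a List.mem_cons_self) (hv b List.mem_cons_self),
        forall_mem_of_mem_support_hp2 P hP u v hu' hv' w' hw'⟩
termination_by u v => u.length + v.length

theorem forall_mem_head?_of_mem_support_hp2 (P : C → Prop)
    (hP : ∀ a b, P a → P b → P ((a.1 + b.1, a.2 * b.2) : C)) {u v : List C}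
    (hu : ∀ x ∈ u.head?, P x) (hv : ∀ x ∈ v.head?, P x) : ∀ w ∈ (hp2 u v).support, ∀ x ∈ w.head?, P x := by
  intro w hw
  match u, v with
  | [], v =>
    rw [hp2_nil_left] at hw
    rwa [mem_singleton.mp (Finsupp.support_single_subset hw)]
  | a :: u, [] =>
    rw [hp2_nil_right] at hw
    rwa [mem_singleton.mp (Finsupp.support_single_subset hw)]
  | a :: u, b :: v =>
    rcases mem_support_hp2_cons_cons hw with ⟨w', -, rfl⟩ | ⟨w', -, rfl⟩ | ⟨w', -, rfl⟩
    · simpa using hu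
    · simpa using hv
    · simpa using hP a b (hu a rfl) (hv b rfl)

theorem Admissible.of_mem_support_hp2 {u v w : List C} (hu : Admissible u) (hv : Admissible v)
    (hw : w ∈ (hp2 u v).support) : Admissible w := by
  refine ⟨forall_mem_of_mem_support_hp2 _ (fun a b ha hb => ?_) u v hu.1 hv.1 w hw,
    forall_mem_head?_of_mem_support_hp2 _ (fun a b ha hb => ?_) hu.2 hv.2 w hw⟩
  · simpa only [norm_mul] using mul_le_one₀ ha (norm_nonneg _) hb
  · simpa only [norm_mul] using mul_lt_one_of_nonneg_of_lt_one_left (norm_nonneg _) ha hb.le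

theorem admissible_colorize {z : ℂ} (hz : ‖z‖ < 1) (ks : List ℕ+) :
    Admissible (colorize z ks) := by
  cases ks with
  | nil => simp [Admissible, colorize]
  | cons k ks => simp [Admissible, colorize, hz, hz.le]

/-- the stuffle (harmonic product) expansion
`Li_{k₁,…,k_i}(z₁)·Li_{l₁,…,l_j}(z₂) = ∑_𝐤 c_𝐤 Li_𝐤`, the sum running over the terms
of the harmonic product `(k₁,…,k_i)*(l₁,…,l_j)` with multiplicities, each term being
the corresponding two-variable multiple polylogarithm. -/
theorem MPL_stuffle (z₁ z₂ : ℂ) (hz₁ : ‖z₁‖ < 1) (hz₂ : ‖z₂‖ < 1) (ks ls : List ℕ+) :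
    GLi (colorize z₁ ks) * GLi (colorize z₂ ls) =
      (hp2 (colorize z₁ ks) (colorize z₂ ls)).sum (fun w c => c * GLi w) := by
  set u := colorize z₁ ks
  set v := colorize z₂ ls
  have hu : Admissible u := admissible_colorize hz₁ ks
  have hv : Admissible v := admissible_colorize hz₂ ls
  refine tendsto_nhds_unique
    (((tendsto_GLiTrunc hu).mul (tendsto_GLiTrunc hv)).congr (GLiTrunc_mul u v)) ?_
  exact tendsto_finsetSum _ fun w hw =>
    (tendsto_GLiTrunc (hu.of_mem_support_hp2 hv hw)).const_mul _

end StuffleStmt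
end
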